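/- arXiv:2009.10397 — 5 statements merged into one kernel-verified Lean document; each statement's English description precedes it below -/
import Mathlib

section
/- Let M be an n×l binary matrix, and for j = 1,...,l let c_j = {i : M_{i,j} = 1} ⊆ {1,...,n}, viewed as a strictly increasing column. Then the top-aligned juxtaposition c_1 c_2 ⋯ c_l is a semistandard Young tableau if and only if the word obtained from the transpose Mᵀ by reading, for i = 1,2,...,n in order, the set {j : M_{i,j} = 1} in increasing order and concatenating, is a lattice word in the alphabet {1,...,l}. -/
/-- The `j`-th column of the binary matrix `M`, as the increasing list of the
(0-indexed) row indices `i` with `M (i,j) = 1`. -/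
def colList {n l : ℕ} (M : Fin n × Fin l → Bool) (j : Fin l) : List ℕ :=
  ((Finset.univ.filter (fun i : Fin n => M (i, j))).image (fun i : Fin n => (i : ℕ))).sort (· ≤ ·)

/-- The top-aligned juxtaposition `c_1 c_2 ⋯ c_l` of the columns of `M` is a
semistandard Young tableau: column lengths weakly decrease and, in each row,
entries weakly increase from left to right.  (Columns strictly increase
automatically, being sets.) -/
def IsTableau {n l : ℕ} (M : Fin n × Fin l → Bool) : Prop :=
  ∀ (j : ℕ) (hj : j + 1 < l),
    (colList M ⟨j + 1, hj⟩).length ≤ (colList M ⟨j, Nat.lt_of_succ_lt hj⟩).length ∧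
    ∀ i < (colList M ⟨j + 1, hj⟩).length,
      (colList M ⟨j, Nat.lt_of_succ_lt hj⟩).getD i 0 ≤ (colList M ⟨j + 1, hj⟩).getD i 0

/-- The row-reading word of the transpose of `M`: for `i = 1,…,n` in order, read the
set `{j : M_{i,j} = 1}` in increasing order (letters taken 1-based in `{1,…,l}`)
and concatenate. -/
def transposeWord {n l : ℕ} (M : Fin n × Fin l → Bool) : List ℕ :=
  (List.finRange n).flatMap (fun i : Fin n =>
    ((Finset.univ.filter (fun j : Fin l => M (i, j))).image (fun j : Fin l => (j : ℕ) + 1)).sort (· ≤ ·))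

/-- Lattice (Yamanouchi) word: every prefix has at least as many letters `i` as
letters `i+1`, for all `i ≥ 1`. -/
def IsLatticeWord (w : List ℕ) : Prop :=
  ∀ k i, 1 ≤ i → (w.take k).count (i + 1) ≤ (w.take k).count i

/-!
Both conditions say that for every `j` and `m`, column `j + 1` has at most as many ones as
column `j` among the first `m` rows of `M`. For strictly increasing columns, entrywise domination
is equivalent to this comparison of the numbers of entries below every threshold `m`. A prefix of
the reading word is the reading of the first `m` rows followed by an initial segment of row `m`;
rows are read in increasing order, so a segment containing `j + 1` already contains `j` if the row
does, and it suffices to look at prefixes ending at row boundaries.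
-/

open Finset

theorem List.getElem_lt_iff_lt_countP {α : Type*} [LinearOrder α] {a : List α}
    (ha : a.Pairwise (· < ·)) {i : ℕ} (hi : i < a.length) (m : α) :
    a[i] < m ↔ i < a.countP (· < m) := by
  induction a generalizing i with
  | nil => simp at hi
  | cons x t ih =>
    obtain ⟨hx, ht⟩ := List.pairwise_cons.1 ha
    by_cases hxm : x < m
    · cases i with
      | zero => simp [hxm]
      | succ i => simpa [List.countP_cons, hxm] using ih ht (by simpa using hi)
    · have h0 : t.countP (· < m) = 0 :=
        List.countP_eq_zero.2 fun y hy => by simpa using (not_lt.1 hxm).trans (hx y hy).le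
      cases i with
      | zero => simp [hxm, h0]
      | succ i =>
        have : m ≤ t[i]'(by simpa using hi) := (not_lt.1 hxm).trans (hx _ (List.getElem_mem _)).le
        simp [hxm, h0, this]

theorem List.le_getD_iff_countP_lt_le {a b : List ℕ}
    (ha : a.Pairwise (· < ·)) (hb : b.Pairwise (· < ·)) :
    (b.length ≤ a.length ∧ ∀ i < b.length, a.getD i 0 ≤ b.getD i 0) ↔
      ∀ m, b.countP (· < m) ≤ a.countP (· < m) := by
  constructor
  · rintro ⟨hlen, hle⟩ m
    by_contra! hlt
    set c := a.countP (· < m)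
    have hc : c < b.length := hlt.trans_le List.countP_le_length
    have hbm : b[c] < m := (b.getElem_lt_iff_lt_countP hb hc m).2 hlt
    have hab : a[c] ≤ b[c] := by
      simpa [List.getD_eq_getElem, hc, hc.trans_le hlen] using hle c hc
    exact (lt_irrefl c) ((a.getElem_lt_iff_lt_countP ha (hc.trans_le hlen) m).1 (hab.trans_lt hbm))
  · intro h
    have hpt : ∀ i (hi : i < b.length), i < a.countP (· < b[i] + 1) := fun i hi =>
      ((b.getElem_lt_iff_lt_countP hb hi _).1 (Nat.lt_succ_self _)).trans_le (h _)
    have hlen : b.length ≤ a.length := by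
      by_contra! hlt
      exact (hpt a.length hlt).not_ge List.countP_le_length
    refine ⟨hlen, fun i hi => ?_⟩
    have hia : i < a.length := hi.trans_le hlen
    rw [List.getD_eq_getElem _ _ hia, List.getD_eq_getElem _ _ hi]
    exact Nat.lt_succ_iff.1 ((a.getElem_lt_iff_lt_countP ha hia _).2 (hpt i hi))

def CountDominated (w : List ℕ) : Prop :=
  ∀ i, 1 ≤ i → w.count (i + 1) ≤ w.count i

theorem List.count_eq_of_isPrefix_of_le_mem {α : Type*} [LinearOrder α] {p r : List α}
    (hr : r.Pairwise (· < ·)) (hp : p <+: r) {x y : α} (hx : x ∈ p) (hy : y ≤ x) :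
    p.count y = r.count y := by
  obtain ⟨t, rfl⟩ := hp
  have ht : t.count y = 0 := List.count_eq_zero.2 fun hyt =>
    absurd ((List.pairwise_append.1 hr).2.2 x hx y hyt) (not_lt.2 hy)
  rw [List.count_append, ht, add_zero]

theorem CountDominated.append_of_isPrefix {u p r : List ℕ} (hr : r.Pairwise (· < ·))
    (hp : p <+: r) (hu : CountDominated u) (hur : CountDominated (u ++ r)) :
    CountDominated (u ++ p) := by
  intro i hi
  by_cases hip : i + 1 ∈ p
  · rw [List.count_append, List.count_append,
      List.count_eq_of_isPrefix_of_le_mem hr hp hip le_rfl,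
      List.count_eq_of_isPrefix_of_le_mem hr hp hip (Nat.le_succ i), ← List.count_append,
      ← List.count_append]
    exact hur i hi
  · rw [List.count_append, List.count_eq_zero.2 hip, add_zero]
    exact (hu i hi).trans ((List.sublist_append_left u p).count_le i)

theorem CountDominated.append_take_flatten {rows : List (List ℕ)}
    (hrows : ∀ r ∈ rows, r.Pairwise (· < ·)) {u : List ℕ}
    (hu : ∀ m, CountDominated (u ++ (rows.take m).flatten)) (k : ℕ) :
    CountDominated (u ++ rows.flatten.take k) := by
  induction rows generalizing u k with
  | nil => simpa using hu 0
  | cons r rows ih =>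
    have hr := hrows r List.mem_cons_self
    rw [List.flatten_cons, List.take_append]
    by_cases hk : k ≤ r.length
    · rw [Nat.sub_eq_zero_of_le hk, List.take_zero, List.append_nil]
      exact .append_of_isPrefix hr (List.take_prefix k r) (by simpa using hu 0)
        (by simpa using hu 1)
    · rw [List.take_of_length_le (by omega), ← List.append_assoc]
      exact ih (fun r' hr' => hrows r' (List.mem_cons_of_mem r hr'))
        (fun m => by simpa using hu (m + 1)) _

theorem isLatticeWord_flatten_iff {rows : List (List ℕ)}
    (hrows : ∀ r ∈ rows, r.Pairwise (· < ·)) :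
    IsLatticeWord rows.flatten ↔ ∀ m, CountDominated (rows.take m).flatten := by
  refine ⟨fun h m => ?_, fun h k => ?_⟩
  · rw [List.prefix_iff_eq_take.1 ((List.take_prefix m rows).flatten)]
    exact h _
  · have := CountDominated.append_take_flatten hrows (u := []) (by simpa using h) k
    rwa [List.nil_append] at this

theorem List.mem_take_finRange {n m : ℕ} (i : Fin n) :
    i ∈ (List.finRange n).take m ↔ (i : ℕ) < m := by
  simp only [List.mem_take_iff_getElem, List.getElem_finRange, List.length_finRange]
  exact ⟨by rintro ⟨j, h, rfl⟩; exact lt_of_lt_of_le h (min_le_left _ _),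
    fun h => ⟨i, lt_min h i.isLt, rfl⟩⟩

section Matrix

variable {n l : ℕ} (M : Fin n × Fin l → Bool)

def colCount (j : Fin l) (m : ℕ) : ℕ :=
  #{i : Fin n | M (i, j) ∧ (i : ℕ) < m}

theorem pairwise_colList (j : Fin l) : (colList M j).Pairwise (· < ·) :=
  (Finset.sortedLT_sort _).pairwise

theorem countP_colList (j : Fin l) (m : ℕ) : (colList M j).countP (· < m) = colCount M j m := by
  rw [colList, ← Multiset.coe_countP, Finset.sort_eq, Multiset.countP_eq_card_filter,
    ← Finset.filter_val, Finset.card_val, Finset.filter_image,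
    Finset.card_image_of_injective _ Fin.val_injective, Finset.filter_filter, colCount]

theorem isTableau_iff_colCount_le :
    IsTableau M ↔ ∀ (j : ℕ) (hj : j + 1 < l) (m : ℕ),
      colCount M ⟨j + 1, hj⟩ m ≤ colCount M ⟨j, Nat.lt_of_succ_lt hj⟩ m := by
  refine forall₂_congr fun j hj => ?_
  rw [List.le_getD_iff_countP_lt_le (pairwise_colList M _) (pairwise_colList M _)]
  simp only [countP_colList]

def rowList (i : Fin n) : List ℕ :=
  ((Finset.univ.filter (fun j : Fin l => M (i, j))).image
    (fun j : Fin l => (j : ℕ) + 1)).sort (· ≤ ·)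

def transposeRows : List (List ℕ) :=
  (List.finRange n).map (rowList M)

theorem transposeWord_eq_flatten : transposeWord M = (transposeRows M).flatten := rfl

theorem pairwise_rowList (i : Fin n) : (rowList M i).Pairwise (· < ·) :=
  (Finset.sortedLT_sort _).pairwise

theorem count_rowList (i : Fin n) (j : Fin l) :
    (rowList M i).count ((j : ℕ) + 1) = if M (i, j) then 1 else 0 := by
  rw [rowList, ← Multiset.coe_count, Finset.sort_eq, Multiset.count_eq_of_nodup (Finset.nodup _)]
  simp [Fin.val_inj]

theorem count_flatten_take_transposeRows (j : Fin l) (m : ℕ) :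
    ((transposeRows M).take m).flatten.count ((j : ℕ) + 1) = colCount M j m := by
  have hnd : ((List.finRange n).take m).Nodup :=
    (List.nodup_finRange n).sublist (List.take_sublist _ _)
  have hfin : ((List.finRange n).take m).toFinset =
      Finset.univ.filter (fun i : Fin n => (i : ℕ) < m) := by
    ext i
    simp [List.mem_take_finRange]
  rw [transposeRows, ← List.map_take, List.count_flatten, List.map_map,
    ← List.sum_toFinset _ hnd, hfin]
  simp [colCount, count_rowList, Finset.sum_boole, Finset.filter_filter, and_comm]

theorem notMem_flatten_take_transposeRows {m c : ℕ} (hc : l < c) :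
    c ∉ ((transposeRows M).take m).flatten := by
  intro hcm
  obtain ⟨_, hr, hcr⟩ := List.mem_flatten.1 hcm
  obtain ⟨i, -, rfl⟩ := List.mem_map.1 (List.mem_of_mem_take hr)
  obtain ⟨j, -, rfl⟩ := by simpa [rowList] using hcr
  omega

theorem countDominated_flatten_take_transposeRows_iff (m : ℕ) :
    CountDominated ((transposeRows M).take m).flatten ↔
      ∀ (j : ℕ) (hj : j + 1 < l),
        colCount M ⟨j + 1, hj⟩ m ≤ colCount M ⟨j, Nat.lt_of_succ_lt hj⟩ m := by
  constructor
  · intro h j hj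
    exact (count_flatten_take_transposeRows M ⟨j + 1, hj⟩ m).symm.trans_le
      ((h (j + 1) (by omega)).trans_eq (count_flatten_take_transposeRows M ⟨j, _⟩ m))
  · rintro h (_ | j) hi
    · omega
    by_cases hj : j + 1 < l
    · exact (count_flatten_take_transposeRows M ⟨j + 1, hj⟩ m).trans_le
        ((h j hj).trans_eq (count_flatten_take_transposeRows M ⟨j, _⟩ m).symm)
    · rw [List.count_eq_zero.2 (notMem_flatten_take_transposeRows M (by omega))]
      exact Nat.zero_le _

end Matrix

/-- **Tableaux correspond to Yamanouchi words under transposition.**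
The columns of a binary matrix `M` juxtapose (top-aligned) to a semistandard Young
tableau if and only if the row-reading word of the transpose of `M` is a lattice
word in the alphabet `{1,…,l}`. -/
theorem isTableau_iff_transpose_lattice {n l : ℕ} (M : Fin n × Fin l → Bool) :
    IsTableau M ↔ IsLatticeWord (transposeWord M) := by
  rw [isTableau_iff_colCount_le, transposeWord_eq_flatten,
    isLatticeWord_flatten_iff (by simpa [transposeRows] using pairwise_rowList M)]
  simp only [countDominated_flatten_take_transposeRows_iff]
  exact ⟨fun h m j hj => h j hj m, fun h j hj m => h m j hj⟩
end

section
/- Let M be an n×l binary matrix. The columns of M, viewed as subsets of {1,...,n}, form a chain under inclusion if and only if there exist a partition λ contained in the n×l rectangle and permutations w of {1,...,n} and ẇ of {1,...,l} such that M is obtained from the matrix M_λ by permuting rows by w and columns by ẇ, where M_λ is the binary matrix with (M_λ)_{i,j} = 1 exactly when j ≤ λ_i. -/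
open Finset

/-!
Order the columns by decreasing size. Since they form a chain, a larger column contains every
smaller one, so in each row the `1`s then occupy an initial segment of columns, whose length is the
row sum. Ordering the rows by decreasing row sum as well produces the Young diagram of the row sums.
-/

theorem Tuple.exists_perm_antitone {n : ℕ} {α : Type*} [LinearOrder α] (f : Fin n → α) :
    ∃ σ : Equiv.Perm (Fin n), Antitone (f ∘ σ) :=
  ⟨Fin.revPerm.trans (Tuple.sort f), fun _ _ h => Tuple.monotone_sort f (Fin.rev_le_rev.mpr h)⟩

theorem Fin.mem_iff_val_lt_card_of_isLowerSet {l : ℕ} {S : Finset (Fin l)}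
    (hS : IsLowerSet (S : Set (Fin l))) (k : Fin l) : k ∈ S ↔ (k : ℕ) < #S := by
  constructor
  · intro hk
    have h := card_le_card fun x hx => hS (mem_Iic.mp hx) hk
    rw [Fin.card_Iic] at h
    omega
  · intro hk
    by_contra hkS
    have h := card_le_card fun x (hx : x ∈ S) =>
      mem_Iio.mpr (lt_of_not_ge fun hkx => hkS (hS hkx hx))
    rw [Fin.card_Iio] at h
    omega

theorem Finset.subset_of_card_le_of_subset_or_subset {α : Type*} {s t : Finset α}
    (hst : s ⊆ t ∨ t ⊆ s) (hcard : #s ≤ #t) : s ⊆ t :=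
  hst.elim id fun hts => (eq_of_subset_of_card_le hts hcard).ge

theorem exists_perm_mem_iff_lt_card_of_chain {α : Type*} [DecidableEq α] {l : ℕ}
    (C : Fin l → Finset α) (hC : ∀ j j', C j ⊆ C j' ∨ C j' ⊆ C j) :
    ∃ τ : Equiv.Perm (Fin l), ∀ a k, a ∈ C (τ k) ↔ (k : ℕ) < #{j | a ∈ C j} := by
  obtain ⟨τ, hτ⟩ := Tuple.exists_perm_antitone fun j => #(C j)
  refine ⟨τ, fun a k => ?_⟩
  have hlower : IsLowerSet (({k | a ∈ C (τ k)} : Finset (Fin l)) : Set (Fin l)) := by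
    intro k' k hkk' hk'
    simp only [coe_filter, mem_univ, true_and, Set.mem_ofPred_eq] at hk' ⊢
    exact subset_of_card_le_of_subset_or_subset (hC _ _) (hτ hkk') hk'
  have hcard : #{k | a ∈ C (τ k)} = #{j | a ∈ C j} := card_equiv τ (by simp)
  simpa [hcard] using Fin.mem_iff_val_lt_card_of_isLowerSet hlower k

/-- **Chain-column binary matrices are row/column permutations of Young diagrams.**
The columns of an `n × l` binary matrix `M` form a chain under inclusion if and only
if there exist a partition `λ` contained in the `n × l` rectangle (weakly decreasing,
with parts at most `l`) and permutations `w` of the rows and `ẇ` of the columns such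
that `M (i,j) = (M_λ) (w i, ẇ j)`, where `M_λ` has a `1` in (0-indexed) position
`(i,j)` exactly when `j < λ_i`. -/
theorem columns_chain_iff_permuted_partition {n l : ℕ} (M : Fin n × Fin l → Bool) :
    (∀ j j' : Fin l,
        {i : Fin n | M (i, j)} ⊆ {i : Fin n | M (i, j')} ∨
        {i : Fin n | M (i, j')} ⊆ {i : Fin n | M (i, j)}) ↔
    ∃ (lam : Fin n → ℕ), (∀ i i' : Fin n, i ≤ i' → lam i' ≤ lam i) ∧ (∀ i, lam i ≤ l) ∧
      ∃ (w : Equiv.Perm (Fin n)) (w' : Equiv.Perm (Fin l)),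
        ∀ (i : Fin n) (j : Fin l), M (i, j) = decide ((w' j : ℕ) < lam (w i)) := by
  constructor
  · intro hchain
    obtain ⟨τ, hτ⟩ := exists_perm_mem_iff_lt_card_of_chain (fun j => {i | M (i, j)})
      fun j j' => by simpa only [← coe_subset, coe_filter, mem_univ, true_and] using hchain j j'
    set rowSum : Fin n → ℕ := fun i => #{j | M (i, j)}
    obtain ⟨σ, hσ⟩ := Tuple.exists_perm_antitone rowSum
    refine ⟨rowSum ∘ σ, fun i i' h => hσ h, fun i => (card_filter_le _ _).trans_eq (card_fin l),
      σ⁻¹, τ⁻¹, fun i j => ?_⟩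
    rw [Function.comp_apply, Equiv.Perm.inv_def σ, σ.apply_symm_apply, Bool.eq_iff_iff,
      decide_eq_true_iff]
    simpa using hτ i (τ⁻¹ j)
  · rintro ⟨lam, -, -, w, w', hM⟩ j j'
    simp only [hM, decide_eq_true_eq, Set.ofPred_subset_ofPred]
    rcases le_total (w' j : ℕ) (w' j') with h | h
    · exact .inr fun i hi => h.trans_lt hi
    · exact .inl fun i hi => h.trans_lt hi
end

section
/- Let 𝒦 be the set of n×l binary matrices whose columns form a chain under inclusion. Then in the polynomial ring in variables x_1,...,x_n, y_1,...,y_l, the sum over M ∈ 𝒦 of ∏_{i,j} (x_i y_j)^{M_{i,j}} equals the sum over partitions λ contained in the n×l rectangle of m_λ(x_1,...,x_n) · m_{λᵀ}(y_1,...,y_l), where m_μ denotes the monomial symmetric polynomial and λᵀ the conjugate partition. -/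
open MvPolynomial

/-- The monomial symmetric polynomial in `k` variables attached to a finitely
supported exponent vector `μ : Fin k → ℕ`: the sum of all *distinct* monomials
obtained by permuting the exponents of `∏ x_i ^ μ i`. -/
noncomputable def mSym (k : ℕ) (μ : Fin k → ℕ) : MvPolynomial (Fin k) ℤ :=
  ∑ α ∈ (Finset.univ : Finset (Equiv.Perm (Fin k))).image (fun σ => fun i => μ (σ i)),
    ∏ i : Fin k, X i ^ α i

/-- The conjugate (transpose) partition of `lam`, with parts bounded by `n`:
its `j`-th part is the number of `i` with `lam i > j`. -/
def conjPart {n : ℕ} (l : ℕ) (lam : Fin n → ℕ) : Fin l → ℕ :=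
  fun j => (Finset.univ.filter (fun i : Fin n => (j : ℕ) < lam i)).card

/-!
Record a binary matrix `M` by its row sums `α` and column sums `β`; its monomial is `x^α y^β`.
If the columns of `M` form a chain, then listing them by decreasing size turns every row into an
initial segment, so `M` is the Ferrers diagram of the partition `λ = sort α` with rows and columns
permuted. Hence `M` is determined by `(α, β)`, and `β` is a rearrangement of `λᵀ`. Conversely,
permuting the rows and columns of the Ferrers diagram of `λ` realises every pair `(α, β)` of
rearrangements of `λ` and `λᵀ`. So `M ↦ (λ, α, β)` is a bijection onto the index set of the
expansion of `∑_λ m_λ(x) m_{λᵀ}(y)` into monomials.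
-/

open Finset Equiv

section Rearrangement

variable {k : ℕ} {α : Type*}

def rearrangements [DecidableEq α] (μ : Fin k → α) : Finset (Fin k → α) :=
  univ.image fun σ : Perm (Fin k) => fun i => μ (σ i)

lemma mem_rearrangements [DecidableEq α] {μ ν : Fin k → α} :
    ν ∈ rearrangements μ ↔ ∃ σ : Perm (Fin k), μ ∘ σ = ν := by
  simp [rearrangements, Function.comp_def]

def antitoneSort [LinearOrder α] (f : Fin k → α) : Perm (Fin k) :=
  Tuple.sort (OrderDual.toDual ∘ f)

lemma antitone_comp_antitoneSort [LinearOrder α] (f : Fin k → α) :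
    Antitone (f ∘ antitoneSort f) :=
  monotone_toDual_comp_iff.mp (Tuple.monotone_sort _)

lemma comp_perm_eq_of_antitone [PartialOrder α] {f : Fin k → α} {σ : Perm (Fin k)}
    (hf : Antitone f) (hfσ : Antitone (f ∘ σ)) : f ∘ σ = f :=
  Tuple.unique_antitone (τ := 1) hfσ hf

end Rearrangement

lemma card_filter_comp_equiv {ι κ : Type*} [Fintype ι] [Fintype κ] (e : ι ≃ κ)
    (p : κ → Prop) [DecidablePred p] : #{i | p (e i)} = #{k | p k} :=
  card_equiv e (by simp)

lemma conjPart_comp_perm {n : ℕ} (l : ℕ) (α : Fin n → ℕ) (σ : Perm (Fin n)) :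
    conjPart l (α ∘ σ) = conjPart l α :=
  funext fun j => card_filter_comp_equiv σ fun i => (j : ℕ) < α i

lemma rename_mSym_mul_rename_mSym {n l : ℕ} (α : Fin n → ℕ) (β : Fin l → ℕ) :
    rename Sum.inl (mSym n α) * rename Sum.inr (mSym l β) =
      ∑ p ∈ rearrangements α ×ˢ rearrangements β,
        (∏ i, (X (Sum.inl i) : MvPolynomial (Fin n ⊕ Fin l) ℤ) ^ p.1 i) *
          ∏ j, X (Sum.inr j) ^ p.2 j := by
  simp only [mSym, map_sum, map_prod, map_pow, rename_X, sum_mul_sum, sum_product]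
  rfl

namespace BinaryMatrix

variable {n l : ℕ}

def rowSum (M : Fin n × Fin l → Bool) (i : Fin n) : ℕ := #{j | M (i, j)}

def colSum (M : Fin n × Fin l → Bool) (j : Fin l) : ℕ := #{i | M (i, j)}

lemma rowSum_le (M : Fin n × Fin l → Bool) (i : Fin n) : rowSum M i ≤ l :=
  (card_filter_le _ _).trans_eq (card_fin l)

lemma prod_prod_pow_ite {R : Type*} [CommMonoid R] (x : Fin n → R) (y : Fin l → R)
    (M : Fin n × Fin l → Bool) :
    ∏ i, ∏ j, (x i * y j) ^ (if M (i, j) then 1 else 0) =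
      (∏ i, x i ^ rowSum M i) * ∏ j, y j ^ colSum M j := by
  simp only [mul_pow, prod_mul_distrib, prod_pow_eq_pow_sum, rowSum, colSum, card_filter]
  rw [prod_comm (s := univ) (t := univ) (f := fun i j => y j ^ if M (i, j) then 1 else 0)]
  simp only [prod_pow_eq_pow_sum]

def HasChainColumns (M : Fin n × Fin l → Bool) : Prop :=
  ∀ j j' : Fin l,
    (∀ i : Fin n, M (i, j) = true → M (i, j') = true) ∨
    (∀ i : Fin n, M (i, j') = true → M (i, j) = true)

lemma HasChainColumns.imp_of_colSum_le {M : Fin n × Fin l → Bool} (hM : HasChainColumns M)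
    {j j' : Fin l} (h : colSum M j ≤ colSum M j') {i : Fin n} (hi : M (i, j) = true) :
    M (i, j') = true := by
  rcases hM j j' with hjj' | hj'j
  · exact hjj' i hi
  · have hsub : (univ.filter fun i => M (i, j') = true) ⊆ univ.filter fun i => M (i, j) = true :=
      fun i => by simpa using hj'j i
    simpa using (eq_of_subset_of_card_le hsub h).ge (by simpa using hi)

lemma HasChainColumns.apply_iff_lt_rowSum {M : Fin n × Fin l → Bool} (hM : HasChainColumns M)
    {τ : Perm (Fin l)} (hτ : Antitone (colSum M ∘ τ)) (i : Fin n) (q : Fin l) :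
    M (i, τ q) = true ↔ (q : ℕ) < rowSum M i := by
  have hdown (q q' : Fin l) (h : q' ≤ q) (hq : M (i, τ q) = true) : M (i, τ q') = true :=
    hM.imp_of_colSum_le (hτ h) hq
  rw [← Fin.lt_card_filter_univ_iff_apply_of_imp _ hdown, rowSum,
    card_filter_comp_equiv τ fun j => M (i, j) = true]

lemma HasChainColumns.colSum_apply {M : Fin n × Fin l → Bool} (hM : HasChainColumns M)
    {τ : Perm (Fin l)} (hτ : Antitone (colSum M ∘ τ)) (q : Fin l) :
    colSum M (τ q) = conjPart l (rowSum M) q := by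
  simp only [colSum, conjPart, hM.apply_iff_lt_rowSum hτ]

lemma HasChainColumns.colSum_mem_rearrangements {M : Fin n × Fin l → Bool}
    (hM : HasChainColumns M) : colSum M ∈ rearrangements (conjPart l (rowSum M)) := by
  have hτ := antitone_comp_antitoneSort (colSum M)
  refine mem_rearrangements.mpr ⟨(antitoneSort (colSum M)).symm, funext fun j => ?_⟩
  simpa using (hM.colSum_apply hτ ((antitoneSort (colSum M)).symm j)).symm

lemma HasChainColumns.ext {M M' : Fin n × Fin l → Bool} (hM : HasChainColumns M)
    (hM' : HasChainColumns M') (hr : rowSum M = rowSum M') (hc : colSum M = colSum M') :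
    M = M' := by
  have hτ := antitone_comp_antitoneSort (colSum M)
  have hτ' : Antitone (colSum M' ∘ antitoneSort (colSum M)) := hc ▸ hτ
  funext ⟨i, j⟩
  obtain ⟨q, rfl⟩ := (antitoneSort (colSum M)).surjective j
  rw [Bool.eq_iff_iff, hM.apply_iff_lt_rowSum hτ, hM'.apply_iff_lt_rowSum hτ', hr]

def ferrersMatrix (α : Fin n → ℕ) (τ : Perm (Fin l)) : Fin n × Fin l → Bool :=
  fun p => decide ((τ p.2 : ℕ) < α p.1)

lemma hasChainColumns_ferrersMatrix (α : Fin n → ℕ) (τ : Perm (Fin l)) :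
    HasChainColumns (ferrersMatrix α τ) := by
  intro j j'
  rcases le_total (τ j' : ℕ) (τ j) with h | h
  · exact .inl fun i hi => by simp only [ferrersMatrix, decide_eq_true_eq] at hi ⊢; omega
  · exact .inr fun i hi => by simp only [ferrersMatrix, decide_eq_true_eq] at hi ⊢; omega

lemma rowSum_ferrersMatrix {α : Fin n → ℕ} (hα : ∀ i, α i ≤ l) (τ : Perm (Fin l)) :
    rowSum (ferrersMatrix α τ) = α := by
  funext i
  simp only [rowSum, ferrersMatrix, decide_eq_true_eq]
  rw [card_filter_comp_equiv τ fun v => (v : ℕ) < α i, Fin.card_filter_val_lt]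
  exact min_eq_right (hα i)

lemma colSum_ferrersMatrix (α : Fin n → ℕ) (τ : Perm (Fin l)) :
    colSum (ferrersMatrix α τ) = conjPart l α ∘ τ := by
  funext j
  simp [colSum, ferrersMatrix, conjPart]

def shape (M : Fin n × Fin l → Bool) : Fin n → Fin (l + 1) :=
  fun k => ⟨rowSum M (antitoneSort (rowSum M) k), Nat.lt_succ_of_le (rowSum_le M _)⟩

lemma antitone_shape (M : Fin n × Fin l → Bool) : Antitone (shape M) :=
  fun _ _ h => antitone_comp_antitoneSort (rowSum M) h

lemma rowSum_mem_rearrangements_shape (M : Fin n × Fin l → Bool) :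
    rowSum M ∈ rearrangements fun k => (shape M k : ℕ) :=
  mem_rearrangements.mpr ⟨(antitoneSort (rowSum M)).symm, funext fun i => by simp [shape]⟩

lemma conjPart_shape (M : Fin n × Fin l → Bool) :
    conjPart l (fun k => (shape M k : ℕ)) = conjPart l (rowSum M) :=
  conjPart_comp_perm l (rowSum M) (antitoneSort (rowSum M))

lemma shape_eq_of_rowSum_eq {M : Fin n × Fin l → Bool} {lam : Fin n → Fin (l + 1)}
    (hlam : Antitone lam) {σ : Perm (Fin n)} (h : rowSum M = fun i => (lam (σ i) : ℕ)) :
    shape M = lam := by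
  have hshape : shape M = lam ∘ (σ * antitoneSort (rowSum M)) := by
    funext k
    exact Fin.ext (by simp [shape, h])
  rw [hshape, comp_perm_eq_of_antitone hlam (hshape ▸ antitone_shape M)]

end BinaryMatrix

open BinaryMatrix

/-- **Generating function of bikeys.**
Summing the monomials `∏_{i,j} (x_i y_j)^{M_{i,j}}` over all `n × l` binary matrices
whose columns form a chain under inclusion yields
`∑_λ m_λ(x) · m_{λᵀ}(y)`, the sum being over partitions `λ` contained in the
`n × l` rectangle. -/
theorem chain_matrices_generating_function (n l : ℕ) :
    ∑ M ∈ (Finset.univ : Finset (Fin n × Fin l → Bool)).filter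
        (fun M => ∀ j j' : Fin l,
          (∀ i : Fin n, M (i, j) = true → M (i, j') = true) ∨
          (∀ i : Fin n, M (i, j') = true → M (i, j) = true)),
      ∏ i : Fin n, ∏ j : Fin l,
        (X (Sum.inl i) * X (Sum.inr j) : MvPolynomial (Fin n ⊕ Fin l) ℤ) ^
          (if M (i, j) then 1 else 0) =
    ∑ lam ∈ (Finset.univ : Finset (Fin n → Fin (l + 1))).filter
        (fun lam => ∀ i i' : Fin n, i ≤ i' → (lam i' : ℕ) ≤ (lam i : ℕ)),
      rename Sum.inl (mSym n (fun i => (lam i : ℕ))) *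
        rename Sum.inr (mSym l (conjPart l (fun i => (lam i : ℕ)))) := by
  simp only [prod_prod_pow_ite]
  rw [sum_congr rfl fun lam _ => rename_mSym_mul_rename_mSym _ _, sum_sigma']
  refine sum_bij (fun M _ => ⟨shape M, rowSum M, colSum M⟩) ?_ ?_ ?_ fun _ _ => rfl
  · intro M hM
    have hchain : HasChainColumns M := (mem_filter.mp hM).2
    simp only [mem_sigma, mem_filter, mem_univ, true_and, mem_product]
    exact ⟨antitone_shape M, rowSum_mem_rearrangements_shape M,
      conjPart_shape M ▸ hchain.colSum_mem_rearrangements⟩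
  · intro M hM M' hM' h
    simp only [Sigma.mk.injEq, heq_eq_eq, Prod.mk.injEq] at h
    exact HasChainColumns.ext (mem_filter.mp hM).2 (mem_filter.mp hM').2 h.2.1 h.2.2
  · rintro ⟨lam, α, β⟩ h
    simp only [mem_sigma, mem_filter, mem_univ, true_and, mem_product, mem_rearrangements] at h
    obtain ⟨hlam, ⟨σ, rfl⟩, ⟨τ, rfl⟩⟩ := h
    set α : Fin n → ℕ := (fun i => (lam i : ℕ)) ∘ σ
    have hrow : rowSum (ferrersMatrix α τ) = α :=
      rowSum_ferrersMatrix (fun i => Fin.is_le (lam (σ i))) τ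
    refine ⟨ferrersMatrix α τ, mem_filter.mpr ⟨mem_univ _, hasChainColumns_ferrersMatrix α τ⟩, ?_⟩
    simp only [shape_eq_of_rowSum_eq hlam hrow, hrow, colSum_ferrersMatrix, α, conjPart_comp_perm]
end

section
/- Let π : {0,...,n} → ℤ be a path with π(0) = 0 and steps ±1, and define P_max(π)(k) = 2·max_{0≤a≤k} π(a) - π(k). Then P_max(π) is again a path starting at 0 with steps ±1, and it satisfies P_max(π)(k) ≥ 0 and P_max(π)(k) ≥ π(k) for all k. -/
/-- A trajectory of length `n`: a path `π : {0,…,n} → ℤ` with `π 0 = 0` and all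
steps equal to `+1` or `-1`. -/
def IsTraj (n : ℕ) (π : Fin (n + 1) → ℤ) : Prop :=
  π 0 = 0 ∧ ∀ k : Fin n, π k.succ - π k.castSucc = 1 ∨ π k.succ - π k.castSucc = -1

/-- The dual Pitman transform `P_max(π)(k) = 2·max_{0 ≤ a ≤ k} π(a) - π(k)`. -/
def Pmax {n : ℕ} (π : Fin (n + 1) → ℤ) : Fin (n + 1) → ℤ :=
  fun k => 2 * (Finset.Iic k).sup' ⟨k, Finset.mem_Iic.2 le_rfl⟩ π - π k

section RunningMax

variable {ι α : Type*} [LinearOrder ι] [LocallyFiniteOrderBot ι] [LinearOrder α]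

def runningMax (f : ι → α) (k : ι) : α :=
  (Finset.Iic k).sup' ⟨k, Finset.mem_Iic.2 le_rfl⟩ f

theorem le_runningMax_of_le (f : ι → α) {j k : ι} (h : j ≤ k) : f j ≤ runningMax f k :=
  Finset.le_sup' f (Finset.mem_Iic.2 h)

theorem le_runningMax (f : ι → α) (k : ι) : f k ≤ runningMax f k :=
  le_runningMax_of_le f le_rfl

theorem runningMax_le_iff {f : ι → α} {k : ι} {b : α} :
    runningMax f k ≤ b ↔ ∀ j ≤ k, f j ≤ b :=
  (Finset.sup'_le_iff _ f).trans <| by simp only [Finset.mem_Iic]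

theorem runningMax_mono (f : ι → α) : Monotone (runningMax f) := fun _ _ hjk =>
  runningMax_le_iff.2 fun _ hi => le_runningMax_of_le f (hi.trans hjk)

theorem runningMax_bot [OrderBot ι] (f : ι → α) : runningMax f ⊥ = f ⊥ :=
  (runningMax_le_iff.2 fun _ hj => (congrArg f (le_bot_iff.1 hj)).le).antisymm
    (le_runningMax f ⊥)

theorem CovBy.runningMax_eq {j k : ι} (h : j ⋖ k) (f : ι → α) :
    runningMax f k = max (f k) (runningMax f j) := by
  refine le_antisymm (runningMax_le_iff.2 fun i hi => ?_)
    (max_le (le_runningMax f k) (runningMax_mono f h.le))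
  rcases hi.eq_or_lt with rfl | hlt
  · exact le_max_left _ _
  · exact le_max_of_le_right (le_runningMax_of_le f (h.le_of_lt hlt))

end RunningMax

theorem Fin.castSucc_covBy_succ {n : ℕ} (k : Fin n) : k.castSucc ⋖ k.succ := by
  simp [Fin.covBy_iff]

theorem Pmax_apply {n : ℕ} (π : Fin (n + 1) → ℤ) (k : Fin (n + 1)) :
    Pmax π k = 2 * runningMax π k - π k :=
  rfl

theorem Pmax_apply_zero {n : ℕ} (π : Fin (n + 1) → ℤ) : Pmax π 0 = π 0 := by
  rw [Pmax_apply, ← bot_eq_zero, runningMax_bot]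
  ring

/-- A `±1` step from `x ≤ M` to `y` moves `2 M - x` to `2 max y M - y` by `±1`: either `y` stays
below the old maximum, or it exceeds it, which forces `y = M + 1`. -/
theorem two_mul_max_sub_step {x y M : ℤ} (hxM : x ≤ M) (hxy : y - x = 1 ∨ y - x = -1) :
    (2 * max y M - y) - (2 * M - x) = 1 ∨ (2 * max y M - y) - (2 * M - x) = -1 := by
  omega

theorem IsTraj.runningMax_nonneg {n : ℕ} {π : Fin (n + 1) → ℤ} (hπ : IsTraj n π)
    (k : Fin (n + 1)) : 0 ≤ runningMax π k :=
  hπ.1 ▸ le_runningMax_of_le π (Fin.zero_le k)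

theorem IsTraj.Pmax {n : ℕ} {π : Fin (n + 1) → ℤ} (hπ : IsTraj n π) :
    IsTraj n (Pmax π) := by
  refine ⟨(Pmax_apply_zero π).trans hπ.1, fun k => ?_⟩
  rw [Pmax_apply, Pmax_apply, k.castSucc_covBy_succ.runningMax_eq]
  exact two_mul_max_sub_step (le_runningMax π k.castSucc) (hπ.2 k)

/-- **`P_max` produces nonnegative dominating trajectories.**
If `π` is a path starting at `0` with steps `±1`, then so is `P_max(π)`, and
moreover `P_max(π)(k) ≥ 0` and `P_max(π)(k) ≥ π(k)` for all `k`. -/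
theorem pmax_isTraj_nonneg_dominates {n : ℕ} (π : Fin (n + 1) → ℤ) (hπ : IsTraj n π) :
    IsTraj n (Pmax π) ∧ ∀ k, 0 ≤ Pmax π k ∧ π k ≤ Pmax π k := by
  refine ⟨hπ.Pmax, fun k => ?_⟩
  have hle := le_runningMax π k
  have hnonneg := hπ.runningMax_nonneg k
  rw [Pmax_apply]
  constructor <;> linarith
end

section
/- For every path π : {0,...,n} → ℤ with π(0) = 0 and steps ±1, there exists an integer m ≥ 0 such that the m-fold iterate of the transform P_max, defined by P_max(π)(k) = 2·max_{0≤a≤k} π(a) - π(k), applied to π equals the trivial trajectory π_0 given by π_0(k) = k for all k. Moreover all further iterates then also equal π_0. -/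
namespace PmaxAux

variable {n : ℕ}

def M (π : Fin (n + 1) → ℤ) (k : Fin (n + 1)) : ℤ :=
  (Finset.Iic k).sup' ⟨k, Finset.mem_Iic.2 le_rfl⟩ π

lemma Pmax_eq (π : Fin (n + 1) → ℤ) (k : Fin (n + 1)) :
    Pmax π k = 2 * M π k - π k := rfl

lemma le_M (π : Fin (n + 1) → ℤ) (k : Fin (n + 1)) : π k ≤ M π k :=
  Finset.le_sup' _ (Finset.mem_Iic.2 le_rfl)

lemma M_zero (π : Fin (n + 1) → ℤ) : M π 0 = π 0 := by
  have h : (Finset.Iic (0 : Fin (n + 1))) = {0} := by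
    ext j
    simp [Fin.le_zero_iff]
  simp [M, h]

lemma Iic_succ (k : Fin n) :
    Finset.Iic (k.succ : Fin (n + 1)) = insert k.succ (Finset.Iic k.castSucc) := by
  ext j
  simp only [Finset.mem_Iic, Finset.mem_insert, Fin.le_def, Fin.ext_iff,
    Fin.val_succ, Fin.coe_castSucc]
  omega

lemma M_mono (π : Fin (n + 1) → ℤ) {j k : Fin (n + 1)} (h : j ≤ k) :
    M π j ≤ M π k := by
  refine Finset.sup'_le _ _ fun a ha => Finset.le_sup' _ ?_
  exact Finset.mem_Iic.2 (le_trans (Finset.mem_Iic.mp ha) h)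

lemma M_succ (π : Fin (n + 1) → ℤ) (k : Fin n) :
    M π k.succ = max (π k.succ) (M π k.castSucc) := by
  apply le_antisymm
  · refine Finset.sup'_le _ _ fun j hj => ?_
    rw [Finset.mem_Iic] at hj
    rcases eq_or_lt_of_le hj with rfl | hlt
    · exact le_max_left _ _
    · refine le_trans (Finset.le_sup' π (Finset.mem_Iic.2 ?_)) (le_max_right _ _)
      have := Fin.lt_def.mp hlt
      rw [Fin.le_def]
      simp only [Fin.coe_castSucc]
      have h2 : (j : ℕ) < (k : ℕ) + 1 := by simpa using this
      omega
  · refine max_le (le_M π k.succ) (M_mono π ?_)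
    rw [Fin.le_def]
    simp

lemma traj_le {π : Fin (n + 1) → ℤ} (hπ : IsTraj n π) (k : Fin (n + 1)) :
    π k ≤ (k : ℕ) := by
  induction k using Fin.induction with
  | zero => simp [hπ.1]
  | succ i ih =>
    rcases hπ.2 i with h | h <;>
      · simp only [Fin.val_succ, Fin.coe_castSucc] at *
        push_cast
        omega

lemma pmax_isTraj {π : Fin (n + 1) → ℤ} (hπ : IsTraj n π) : IsTraj n (Pmax π) := by
  constructor
  · rw [Pmax_eq, M_zero, hπ.1]; ring
  · intro k
    have h1 := M_succ π k
    have h2 := le_M π k.castSucc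
    rw [Pmax_eq, Pmax_eq, h1]
    rcases hπ.2 k with h | h <;>
      rcases le_total (π k.succ) (M π k.castSucc) with hle | hle <;>
      simp only [max_eq_left hle, max_eq_right hle] <;> omega

lemma fixed_of_pmax_eq {π : Fin (n + 1) → ℤ} (hπ : IsTraj n π) (h : Pmax π = π) :
    π = fun k : Fin (n + 1) => ((k : ℕ) : ℤ) := by
  have hM : ∀ k, π k = M π k := by
    intro k
    have := congrFun h k
    rw [Pmax_eq] at this
    omega
  funext k
  induction k using Fin.induction with
  | zero => simp [hπ.1]
  | succ i ih =>
    have hstep : π i.succ - π i.castSucc = 1 := by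
      rcases hπ.2 i with h' | h'
      · exact h'
      · exfalso
        have h1 : π i.castSucc ≤ M π i.castSucc := le_M π i.castSucc
        have h2 : M π i.castSucc ≤ M π i.succ := M_mono π (by rw [Fin.le_def]; simp)
        rw [← hM i.castSucc, ← hM i.succ] at h2
        omega
    simp only [Fin.val_succ, Fin.coe_castSucc] at *
    push_cast
    omega

lemma M_triv (k : Fin (n + 1)) :
    M (fun k : Fin (n + 1) => ((k : ℕ) : ℤ)) k = (k : ℕ) := by
  apply le_antisymm
  · refine Finset.sup'_le _ _ fun j hj => ?_
    rw [Finset.mem_Iic, Fin.le_def] at hj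
    exact_mod_cast hj
  · exact le_M _ k

lemma pmax_triv : Pmax (fun k : Fin (n + 1) => ((k : ℕ) : ℤ)) =
    fun k : Fin (n + 1) => ((k : ℕ) : ℤ) := by
  funext k
  rw [Pmax_eq, M_triv]
  ring

lemma le_pmax (π : Fin (n + 1) → ℤ) (k : Fin (n + 1)) : π k ≤ Pmax π k := by
  have := le_M π k
  rw [Pmax_eq]
  omega

lemma pmax_iterate_triv (j : ℕ) :
    Pmax^[j] (fun k : Fin (n + 1) => ((k : ℕ) : ℤ)) =
      fun k : Fin (n + 1) => ((k : ℕ) : ℤ) := by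
  induction j with
  | zero => rfl
  | succ j ih => rw [Function.iterate_succ_apply, pmax_triv, ih]

lemma key (N : ℕ) : ∀ π : Fin (n + 1) → ℤ, IsTraj n π →
    ((∑ k : Fin (n + 1), ((k : ℕ) : ℤ)) - ∑ k, π k).toNat ≤ N →
    ∃ m, Pmax^[m] π = fun k : Fin (n + 1) => ((k : ℕ) : ℤ) := by
  induction N using Nat.strong_induction_on with
  | _ N ih =>
    intro π hπ hd
    by_cases hfix : Pmax π = π
    · exact ⟨0, fixed_of_pmax_eq hπ hfix⟩
    · have hlt : (∑ k, π k) < ∑ k, Pmax π k := by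
        refine Finset.sum_lt_sum (fun k _ => le_pmax π k) ?_
        obtain ⟨k, hk⟩ := Function.ne_iff.mp hfix
        exact ⟨k, Finset.mem_univ k, lt_of_le_of_ne (le_pmax π k) (Ne.symm hk)⟩
      have hub : (∑ k, Pmax π k) ≤ ∑ k : Fin (n + 1), ((k : ℕ) : ℤ) :=
        Finset.sum_le_sum fun k _ => traj_le (pmax_isTraj hπ) k
      have hlt2 : ((∑ k : Fin (n + 1), ((k : ℕ) : ℤ)) - ∑ k, Pmax π k).toNat < N := by
        omega
      obtain ⟨m, hm⟩ := ih _ hlt2 (Pmax π) (pmax_isTraj hπ) le_rfl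
      exact ⟨m + 1, by rw [Function.iterate_succ_apply, hm]⟩

end PmaxAux

/-- **Iterating `P_max` converges to the trivial trajectory.**
For every path `π` starting at `0` with steps `±1`, some iterate of `P_max`
applied to `π` equals the trivial trajectory `k ↦ k`, and all further iterates
equal it as well. -/
theorem pmax_iterate_converges {n : ℕ} (π : Fin (n + 1) → ℤ) (hπ : IsTraj n π) :
    ∃ m : ℕ, ∀ m' : ℕ, m ≤ m' →
      Pmax^[m'] π = fun k : Fin (n + 1) => ((k : ℕ) : ℤ) := by
  obtain ⟨m, hm⟩ := PmaxAux.key _ π hπ le_rfl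
  refine ⟨m, fun m' hle => ?_⟩
  have : Pmax^[m' - m] (Pmax^[m] π) = Pmax^[m'] π := by
    rw [← Function.iterate_add_apply]
    congr 1
    omega
  rw [← this, hm, PmaxAux.pmax_iterate_triv]
end
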